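/- arXiv:0901.1340 — 3 statements merged into one kernel-verified Lean document; each statement's English description precedes it below -/
import Mathlib

section
/- Let N = p^m be a prime power and let f : (ℤ/Nℤ)* → (ℤ/p^{m-i}ℤ)* be the group homomorphism induced by the ring reduction map, where 1 ≤ i ≤ m-1. Then the stabilizer of the element [p^i] ∈ ℤ/Nℤ under the multiplication action of (ℤ/Nℤ)* equals the kernel of f. -/
/-! Multiplication by `d` on `ℤ/(n d)ℤ` has kernel `nℤ/(n d)ℤ`, so a lift `a` of `u` fixes `[d]`
exactly when `n ∣ a - 1`, i.e. when `u` reduces to `1` modulo `n`. -/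

theorem ZMod.mul_natCast_eq_self_iff_castHom_eq_one {N n d : ℕ} (hN : n * d = N) (hd : d ≠ 0)
    (x : ZMod N) :
    x * d = d ↔ ZMod.castHom (hN ▸ dvd_mul_right n d) (ZMod n) x = 1 := by
  subst hN
  obtain ⟨a, rfl⟩ := ZMod.intCast_surjective x
  have hd' : (d : ℤ) ≠ 0 := by exact_mod_cast hd
  calc ((a : ZMod (n * d)) * d = d)
      ↔ (((a - 1) * d : ℤ) : ZMod (n * d)) = 0 := by push_cast; rw [sub_one_mul, sub_eq_zero]
    _ ↔ (n : ℤ) * d ∣ (a - 1) * d := by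
      rw [ZMod.intCast_zmod_eq_zero_iff_dvd]; push_cast; rfl
    _ ↔ (n : ℤ) ∣ a - 1 := mul_dvd_mul_iff_right hd'
    _ ↔ ((a - 1 : ℤ) : ZMod n) = 0 := (ZMod.intCast_zmod_eq_zero_iff_dvd _ _).symm
    _ ↔ ZMod.castHom (dvd_mul_right n d) (ZMod n) a = 1 := by
      rw [map_intCast]; push_cast; exact sub_eq_zero

/-- For `N = p^m` a prime power (`m ≥ 2`) and `1 ≤ i ≤ m-1`, the stabilizer of
`[p^i] ∈ ℤ/Nℤ` under the multiplication action of `(ℤ/Nℤ)ˣ` equals the kernel of the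
homomorphism `(ℤ/p^mℤ)ˣ → (ℤ/p^(m-i)ℤ)ˣ` induced by the ring reduction map. -/
theorem stmt0 (p m i : ℕ) (hp : p.Prime) (hi2 : i ≤ m - 1) :
    MulAction.stabilizer (ZMod (p ^ m))ˣ ((p : ZMod (p ^ m)) ^ i) =
      (Units.map (ZMod.castHom (pow_dvd_pow p (by omega : m - i ≤ m))
        (ZMod (p ^ (m - i)))).toMonoidHom).ker := by
  have hsplit : p ^ (m - i) * p ^ i = p ^ m := by rw [← pow_add, Nat.sub_add_cancel (by omega)]
  ext u
  rw [MulAction.mem_stabilizer_iff, MonoidHom.mem_ker, Units.smul_def, smul_eq_mul, Units.ext_iff,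
    Units.coe_map, Units.val_one]
  exact_mod_cast ZMod.mul_natCast_eq_self_iff_castHom_eq_one hsplit (pow_ne_zero i hp.ne_zero) u
end

section
/- Let N = p^m be a prime power. The following set is a complete set of orbit representatives for the scaling action of (ℤ/Nℤ)* on the set 𝕐_N of unimodular pairs in (ℤ/Nℤ)²: all pairs (a,b) with either (a,b) = ([0],[1]); or a = [1] and b arbitrary in ℤ/Nℤ; or a = [p^i] for some 1 ≤ i ≤ m-1 and b = [b̄] with 1 ≤ b̄ ≤ p^{m-i} and gcd(b̄, p) = 1. That is, every unimodular pair lies in the same orbit as exactly one pair from this set. -/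
/-- A pair in `(ℤ/Nℤ)²` is unimodular if it admits integer lifts `ā, b̄` with
`gcd(ā, b̄, N) = 1`. -/
def Unimodular (N : ℕ) (v : ZMod N × ZMod N) : Prop :=
  ∃ A B : ℤ, (A : ZMod N) = v.1 ∧ (B : ZMod N) = v.2 ∧
    Int.gcd (Int.gcd A B) (N : ℤ) = 1

/-- The distinguished set of orbit representatives for the scaling action of `(ℤ/p^mℤ)ˣ`
on unimodular pairs: `([0],[1])`; `([1], b)` with `b` arbitrary; and `([p^i], [b̄])` with
`1 ≤ i ≤ m-1`, `1 ≤ b̄ ≤ p^(m-i)` and `gcd(b̄, p) = 1`. -/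
def IsRep (p m : ℕ) (w : ZMod (p ^ m) × ZMod (p ^ m)) : Prop :=
  w = (0, 1) ∨ w.1 = 1 ∨
    ∃ i b : ℕ, 1 ≤ i ∧ i ≤ m - 1 ∧ 1 ≤ b ∧ b ≤ p ^ (m - i) ∧ Nat.Coprime b p ∧
      w.1 = (p : ZMod (p ^ m)) ^ i ∧ w.2 = (b : ZMod (p ^ m))

/-! Every `a : ZMod (p ^ m)` is `c * p ^ k` with `c` a unit and `k ≤ m`, and scaling by a unit
preserves `k`; so `k` separates the three kinds of representatives (`k = m`, `k = 0`,
`0 < k < m`). `ZMod (p ^ m)` is local, so a unimodular pair has a unit coordinate, which for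
`0 < k` is the second one. Since `p ^ k * x` only depends on `x mod p ^ (m - k)`, that second
coordinate can be replaced by its residue in `[1, p ^ (m - k)]` without leaving the orbit, and
the same fact shows that this residue is an orbit invariant. -/

open MulAction

lemma Unimodular.isCoprime {N : ℕ} {v : ZMod N × ZMod N} (hv : Unimodular N v) :
    IsCoprime v.1 v.2 := by
  obtain ⟨A, B, hA, hB, hAB⟩ := hv
  obtain ⟨a, b, h⟩ := Int.isCoprime_iff_gcd_eq_one.mpr hAB
  refine ⟨a * A.gcdA B, a * A.gcdB B, ?_⟩
  rw [← hA, ← hB]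
  have h' := congrArg (Int.cast : ℤ → ZMod N) h
  rw [Int.gcd_eq_gcd_ab] at h'
  push_cast [ZMod.natCast_self] at h'
  linear_combination h'

lemma mem_orbit_units_iff {R : Type*} [Monoid R] {v w : R × R} :
    w ∈ orbit Rˣ v ↔ ∃ u : Rˣ, w.1 = u * v.1 ∧ w.2 = u * v.2 := by
  simp [mem_orbit_iff, Prod.ext_iff, Units.smul_def, eq_comm]

namespace ZMod

variable {p m : ℕ} [Fact p.Prime]

lemma natCast_dvd_of_not_isUnit (hm : m ≠ 0) {x : ZMod (p ^ m)} (hx : ¬IsUnit x) :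
    (p : ZMod (p ^ m)) ∣ x := by
  rw [← natCast_zmod_val x, isUnit_natCast_iff_not_dvd_pow Fact.out (Nat.pos_of_ne_zero hm),
    not_not] at hx
  obtain ⟨k, hk⟩ := hx
  exact ⟨k, by rw [← natCast_zmod_val x, hk, Nat.cast_mul]⟩

lemma isUnit_or_isUnit_of_isCoprime (hm : m ≠ 0) {x y : ZMod (p ^ m)} (h : IsCoprime x y) :
    IsUnit x ∨ IsUnit y := by
  by_contra! hxy
  exact prime_natCast_not_isUnit_pow Fact.out (Nat.pos_of_ne_zero hm)
    (h.isUnit_of_dvd' (natCast_dvd_of_not_isUnit hm hxy.1) (natCast_dvd_of_not_isUnit hm hxy.2))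

lemma exists_eq_units_mul_pow (a : ZMod (p ^ m)) :
    ∃ k ≤ m, ∃ u : (ZMod (p ^ m))ˣ, a = u * (p : ZMod (p ^ m)) ^ k := by
  obtain ⟨d, hd, u, hu, rfl⟩ := eq_unit_mul_divisor a
  obtain ⟨k, hk, rfl⟩ := (Nat.dvd_prime_pow Fact.out).mp hd
  exact ⟨k, hk, hu.unit, by simp⟩

lemma natCast_pow_eq_zero_iff {k : ℕ} : (p : ZMod (p ^ m)) ^ k = 0 ↔ m ≤ k := by
  rw [← Nat.cast_pow, natCast_eq_zero_iff,
    Nat.pow_dvd_pow_iff_le_right (Fact.out : p.Prime).one_lt]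

lemma le_of_pow_eq_units_mul_pow {i j : ℕ} (hj : j ≤ m) {u : (ZMod (p ^ m))ˣ}
    (h : (p : ZMod (p ^ m)) ^ i = u * (p : ZMod (p ^ m)) ^ j) : j ≤ i := by
  by_contra! hij
  have : (p : ZMod (p ^ m)) ^ (i + (m - j)) = u * (p : ZMod (p ^ m)) ^ (j + (m - j)) := by
    rw [pow_add, pow_add, h, mul_assoc]
  rw [Nat.add_sub_cancel' hj, natCast_pow_eq_zero_iff.mpr le_rfl, mul_zero,
    natCast_pow_eq_zero_iff] at this
  omega

lemma eq_of_pow_eq_units_mul_pow {i j : ℕ} (hi : i ≤ m) (hj : j ≤ m) {u : (ZMod (p ^ m))ˣ}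
    (h : (p : ZMod (p ^ m)) ^ i = u * (p : ZMod (p ^ m)) ^ j) : i = j :=
  le_antisymm (le_of_pow_eq_units_mul_pow hi (by rw [h, Units.inv_mul_cancel_left]))
    (le_of_pow_eq_units_mul_pow hj h)

lemma pow_mul_natCast_eq_iff {k : ℕ} (hk : k ≤ m) {x y : ℕ} :
    (p : ZMod (p ^ m)) ^ k * x = (p : ZMod (p ^ m)) ^ k * y ↔ x ≡ y [MOD p ^ (m - k)] := by
  rw [← Nat.ModEq.mul_left_cancel_iff' (pow_ne_zero k (Fact.out : p.Prime).ne_zero), ← pow_add,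
    Nat.add_sub_cancel' hk, ← natCast_eq_natCast_iff]
  push_cast
  rfl

end ZMod

section Representatives

variable {p m : ℕ} [Fact p.Prime]

lemma Nat.ModEq.eq_of_coprime_of_le_pow {n b₁ b₂ : ℕ} (h : b₁ ≡ b₂ [MOD p ^ n]) (hn : n ≠ 0)
    (hc₁ : b₁.Coprime p) (hc₂ : b₂.Coprime p) (h₁ : b₁ ≤ p ^ n) (h₂ : b₂ ≤ p ^ n) : b₁ = b₂ := by
  have hlt {b : ℕ} (hc : b.Coprime p) (hb : b ≤ p ^ n) : b < p ^ n := by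
    refine hb.lt_of_ne ?_
    rintro rfl
    rw [Nat.coprime_pow_left_iff (Nat.pos_of_ne_zero hn), Nat.coprime_self] at hc
    exact (Fact.out : p.Prime).one_lt.ne' hc
  exact h.eq_of_lt_of_lt (hlt hc₁ h₁) (hlt hc₂ h₂)

lemma IsRep.eq_of_mem_orbit (hm : m ≠ 0) {w₁ w₂ : ZMod (p ^ m) × ZMod (p ^ m)}
    (h₁ : IsRep p m w₁) (h₂ : IsRep p m w₂) (h : w₂ ∈ orbit (ZMod (p ^ m))ˣ w₁) : w₂ = w₁ := by
  obtain ⟨u, rfl⟩ := mem_orbit_iff.mp h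
  have hexp {i j : ℕ} (hi : i ≤ m) (hj : j ≤ m) (h₁ : w₁.1 = (p : ZMod (p ^ m)) ^ i)
      (h₂ : (u • w₁).1 = (p : ZMod (p ^ m)) ^ j) : j = i :=
    ZMod.eq_of_pow_eq_units_mul_pow hj hi (by rw [← h₂, ← h₁]; rfl)
  have hzero : (0 : ZMod (p ^ m)) = (p : ZMod (p ^ m)) ^ m :=
    (ZMod.natCast_pow_eq_zero_iff.mpr le_rfl).symm
  -- The first coordinates of the three kinds are `p ^ m`, `p ^ 0` and `p ^ i` with `0 < i < m`.
  rcases h₁ with rfl | h₁ | ⟨i, b₁, hi, him, -, hb₁', hc₁, ha₁, hb₁⟩ <;>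
    rcases h₂ with h₂ | h₂ | ⟨j, b₂, hj, hjm, -, hb₂', hc₂, ha₂, hb₂⟩
  · exact h₂
  · exact absurd (hexp le_rfl (Nat.zero_le m) hzero (by rw [h₂, pow_zero])) (Ne.symm hm)
  · exact absurd (hexp le_rfl (by omega) hzero ha₂) (by omega)
  · exact absurd (hexp (Nat.zero_le m) le_rfl (by rw [h₁, pow_zero]) (by rw [h₂]; exact hzero))
      hm
  · have hu : (u : ZMod (p ^ m)) * w₁.1 = 1 := h₂
    rw [h₁, mul_one, Units.val_eq_one] at hu
    rw [hu, one_smul]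
  · exact absurd (hexp (Nat.zero_le m) (by omega) (by rw [h₁, pow_zero]) ha₂) (by omega)
  · exact absurd (hexp (by omega) le_rfl ha₁ (by rw [h₂]; exact hzero)) (by omega)
  · exact absurd (hexp (by omega) (Nat.zero_le m) ha₁ (by rw [h₂, pow_zero])) (by omega)
  · obtain rfl := hexp (by omega) (by omega) ha₁ ha₂
    have hu : (u : ZMod (p ^ m)) * (p : ZMod (p ^ m)) ^ j = (p : ZMod (p ^ m)) ^ j := by
      have h : (u : ZMod (p ^ m)) * w₁.1 = (p : ZMod (p ^ m)) ^ j := ha₂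
      rwa [ha₁] at h
    have hpb : (p : ZMod (p ^ m)) ^ j * b₂ = (p : ZMod (p ^ m)) ^ j * b₁ := calc
      _ = (p : ZMod (p ^ m)) ^ j * (u * w₁.2) := by rw [← hb₂]; rfl
      _ = (u * (p : ZMod (p ^ m)) ^ j) * w₁.2 := by ring
      _ = _ := by rw [hu, hb₁]
    have hb : b₂ = b₁ :=
      ((ZMod.pow_mul_natCast_eq_iff (by omega)).mp hpb).eq_of_coprime_of_le_pow (by omega)
        hc₂ hc₁ hb₂' hb₁'
    exact Prod.ext (ha₂.trans ha₁.symm) (by rw [hb₂, hb₁, hb])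

lemma exists_isRep_mem_orbit_pow_units {k : ℕ} (hk₀ : k ≠ 0) (hkm : k ≤ m)
    (b : (ZMod (p ^ m))ˣ) :
    ∃ w, IsRep p m w ∧
      w ∈ orbit (ZMod (p ^ m))ˣ ((p : ZMod (p ^ m)) ^ k, (b : ZMod (p ^ m))) := by
  rcases hkm.lt_or_eq with hkm | rfl
  · set r := (b : ZMod (p ^ m)).val % p ^ (m - k)
    have hrb : r ≡ (b : ZMod (p ^ m)).val [MOD p ^ (m - k)] := Nat.mod_modEq _ _
    have hrp : r.Coprime p := by
      rw [Nat.Coprime, (hrb.of_dvd (dvd_pow_self p (by omega))).gcd_eq]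
      exact (ZMod.val_coe_unit_coprime b).coprime_dvd_right (dvd_pow_self p (by omega))
    have hr₀ : r ≠ 0 := by
      rintro hr
      rw [hr, Nat.coprime_zero_left] at hrp
      exact (Fact.out : p.Prime).one_lt.ne' hrp
    have hru : IsUnit (r : ZMod (p ^ m)) := (ZMod.isUnit_iff_coprime r _).mpr (hrp.pow_right m)
    have hpr := (ZMod.pow_mul_natCast_eq_iff hkm.le).mpr hrb
    rw [ZMod.natCast_zmod_val] at hpr
    have hr_le : r ≤ p ^ (m - k) := (Nat.mod_lt _ (pow_pos (Fact.out : p.Prime).pos _)).le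
    refine ⟨((p : ZMod (p ^ m)) ^ k, r),
      Or.inr (Or.inr ⟨k, r, by omega, by omega, Nat.pos_of_ne_zero hr₀, hr_le, hrp, rfl, rfl⟩),
      mem_orbit_units_iff.mpr ⟨hru.unit * b⁻¹, ?_, ?_⟩⟩
    · dsimp only
      rw [Units.val_mul, IsUnit.unit_spec, mul_right_comm, mul_comm (r : ZMod (p ^ m)), hpr,
        Units.mul_inv_cancel_right]
    · simp
  · refine ⟨(0, 1), Or.inl rfl, mem_orbit_units_iff.mpr ⟨b⁻¹, ?_, by simp⟩⟩
    simp [ZMod.natCast_pow_eq_zero_iff.mpr le_rfl]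

lemma Unimodular.exists_isRep_mem_orbit (hm : m ≠ 0) {v : ZMod (p ^ m) × ZMod (p ^ m)}
    (hv : Unimodular (p ^ m) v) : ∃ w, IsRep p m w ∧ w ∈ orbit (ZMod (p ^ m))ˣ v := by
  obtain ⟨k, hkm, c, hc⟩ := ZMod.exists_eq_units_mul_pow v.1
  have hcv : ((p : ZMod (p ^ m)) ^ k, ↑c⁻¹ * v.2) ∈ orbit (ZMod (p ^ m))ˣ v :=
    mem_orbit_units_iff.mpr ⟨c⁻¹, by simp [hc], rfl⟩
  rcases eq_or_ne k 0 with rfl | hk₀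
  · exact ⟨_, Or.inr (Or.inl (pow_zero _)), hcv⟩
  have hv₂ : IsUnit v.2 := by
    refine (ZMod.isUnit_or_isUnit_of_isCoprime hm hv.isCoprime).resolve_left fun hv₁ => ?_
    refine ZMod.prime_natCast_not_isUnit_pow Fact.out (Nat.pos_of_ne_zero hm)
      (isUnit_of_dvd_unit ?_ hv₁)
    rw [hc]
    exact (dvd_pow_self _ hk₀).mul_left _
  obtain ⟨w, hw, hwv⟩ := exists_isRep_mem_orbit_pow_units hk₀ hkm (c⁻¹ * hv₂.unit)
  refine ⟨w, hw, orbit_eq_iff.mpr hcv ▸ ?_⟩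
  simpa using hwv

end Representatives

/-- for `N = p^m`, the set `IsRep` is a complete set of orbit representatives
for the scaling action of `(ℤ/Nℤ)ˣ` on the set of unimodular pairs: every unimodular pair
lies in the same orbit as exactly one representative. -/
theorem stmt8 (p m : ℕ) (hp : p.Prime) (hm : 1 ≤ m) :
    ∀ v : ZMod (p ^ m) × ZMod (p ^ m), Unimodular (p ^ m) v →
      ∃! w : ZMod (p ^ m) × ZMod (p ^ m), IsRep p m w ∧
        ∃ u : (ZMod (p ^ m))ˣ,
          w.1 = (u : ZMod (p ^ m)) * v.1 ∧ w.2 = (u : ZMod (p ^ m)) * v.2 := by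
  have := Fact.mk hp
  intro v hv
  simp_rw [← mem_orbit_units_iff]
  obtain ⟨w, hw, hwv⟩ := hv.exists_isRep_mem_orbit (by omega)
  refine ⟨w, ⟨hw, hwv⟩, fun w' ⟨hw', hw'v⟩ => hw.eq_of_mem_orbit (by omega) hw' ?_⟩
  rwa [orbit_eq_iff.mpr hwv]
end

section
/- Let Γ = PSL₂(ℤ) act on the upper half-plane ℍ by Möbius transformations, and let r be the hyperbolic geodesic segment joining i and e^{πi/3}. If g ∈ Γ satisfies g·r ∩ r ≠ ∅ and g ≠ 1, then g·r ∩ r ⊆ {i, e^{πi/3}}; moreover if g·i = i then g ∈ ⟨S⟩ and if g·e^{πi/3} = e^{πi/3} then g ∈ ⟨U⟩, where S = [[0,-1],[1,0]] and U = [[0,1],[-1,1]]. -/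
open Matrix UpperHalfPlane
open scoped MatrixGroups

/-- The matrix `S = [[0,-1],[1,0]]` in `SL₂(ℤ)`. -/
def matS : SL(2, ℤ) := ⟨!![0, -1; 1, 0], by norm_num [Matrix.det_fin_two_of]⟩

/-- The matrix `U = [[0,1],[-1,1]]` in `SL₂(ℤ)`. -/
def matU : SL(2, ℤ) := ⟨!![0, 1; -1, 1], by norm_num [Matrix.det_fin_two_of]⟩

/-- The point `e^{πi/3} = 1/2 + i√3/2` of the upper half-plane. -/
noncomputable def rho : ℍ := ⟨⟨1/2, Real.sqrt 3 / 2⟩, by norm_num [Real.sqrt_pos]⟩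

/-- The hyperbolic geodesic segment joining `i` and `e^{πi/3}`: the arc of the unit circle
with real part between `0` and `1/2`. -/
noncomputable def seg : Set ℍ := {z : ℍ | ‖(z : ℂ)‖ = 1 ∧ 0 ≤ z.re ∧ z.re ≤ 1/2}

/-!
For `z` in the closed fundamental domain `𝒟` and coprime `(c, d)` one has
`|cz + d|² ≥ c² - |cd| + d² ≥ 1`, so no element of `SL(2, ℤ)` raises the imaginary part
of `z`. If `z` and `g • z` both lie in `𝒟`, applying this to `g` and to `g⁻¹` gives
`Im (g • z) = Im z`. A point of the arc `r` is determined by its imaginary part, so every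
point of `g • r ∩ r` is fixed by `g`, and the stabilisers of points of `𝒟` are known: they
are `±1` except at `i`, `ρ = e^{2πi/3}` and `1 + ρ = e^{πi/3}`. The stabiliser of
`e^{πi/3} = T • ρ` is the `T`-conjugate of that of `ρ`.
-/

open ModularGroup
open Complex (normSq normSq_apply normSq_eq_norm_sq)
open scoped Modular

lemma one_le_sq_sub_abs_mul_add_sq {c d : ℤ} (h : c ≠ 0 ∨ d ≠ 0) :
    1 ≤ c ^ 2 - |c * d| + d ^ 2 := by
  rw [abs_mul, ← sq_abs c, ← sq_abs d]
  rcases h with h | h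
  · have := Int.one_le_abs h
    rcases (abs_nonneg d).eq_or_lt with hd | hd
    · rw [← hd]; nlinarith
    · nlinarith [sq_nonneg (|c| - |d|)]
  · have := Int.one_le_abs h
    rcases (abs_nonneg c).eq_or_lt with hc | hc
    · rw [← hc]; nlinarith
    · nlinarith [sq_nonneg (|c| - |d|)]

namespace ModularGroup

lemma one_le_normSq_denom_of_mem_fd (g : SL(2, ℤ)) {z : ℍ} (hz : z ∈ 𝒟) :
    1 ≤ normSq (denom g z) := by
  have hcd : g 1 0 ≠ 0 ∨ g 1 1 ≠ 0 := by
    by_contra! h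
    exact not_isCoprime_zero_zero (by simpa [h.1, h.2] using bottom_row_coprime g)
  have hint : (1 : ℝ) ≤ (g 1 0 : ℝ) ^ 2 - |(g 1 0 : ℝ) * g 1 1| + (g 1 1 : ℝ) ^ 2 := by
    exact_mod_cast one_le_sq_sub_abs_mul_add_sq hcd
  have hnorm : 1 ≤ z.re ^ 2 + z.im ^ 2 := by simpa [normSq_apply, sq] using hz.1
  have hcross : |2 * ((g 1 0 : ℝ) * g 1 1) * z.re| ≤ |(g 1 0 : ℝ) * g 1 1| := by
    rw [abs_mul, abs_mul, abs_two]
    nlinarith [hz.2, abs_nonneg ((g 1 0 : ℝ) * g 1 1)]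
  simp only [denom_apply, normSq_apply, Complex.add_re, Complex.add_im, Complex.mul_re,
    Complex.mul_im, Complex.intCast_re, Complex.intCast_im, coe_re, coe_im, zero_mul, sub_zero,
    add_zero]
  nlinarith [sq_nonneg (g 1 0 : ℝ), neg_abs_le (2 * ((g 1 0 : ℝ) * g 1 1) * z.re)]

lemma im_smul_le_im_of_mem_fd (g : SL(2, ℤ)) {z : ℍ} (hz : z ∈ 𝒟) :
    (g • z).im ≤ z.im := by
  rw [im_smul_eq_div_normSq]
  exact div_le_self z.im_pos.le (one_le_normSq_denom_of_mem_fd g hz)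

lemma im_smul_eq_im_of_mem_fd {g : SL(2, ℤ)} {z : ℍ} (hz : z ∈ 𝒟) (hgz : g • z ∈ 𝒟) :
    (g • z).im = z.im :=
  (im_smul_le_im_of_mem_fd g hz).antisymm (by simpa using im_smul_le_im_of_mem_fd g⁻¹ hgz)

end ModularGroup

lemma Matrix.ProjectiveSpecialLinearGroup.mk_neg {R : Type*} [CommRing R] (g : SL(2, R)) :
    (QuotientGroup.mk (-g) : PSL(2, R)) = QuotientGroup.mk g := by
  have hcenter : (-1 : SL(2, R)) ∈ Subgroup.center SL(2, R) :=
    Subgroup.mem_center_iff.mpr fun h => by simp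
  rw [← neg_one_mul, QuotientGroup.mk_mul, (QuotientGroup.eq_one_iff _).mpr hcenter, one_mul]

lemma seg_subset_fd : seg ⊆ 𝒟 := by
  rintro z ⟨hnorm, hre₀, hre₁⟩
  refine ⟨by rw [normSq_eq_norm_sq, hnorm]; norm_num, abs_le.mpr ⟨by linarith, hre₁⟩⟩

lemma re_sq_add_im_sq_of_mem_seg {z : ℍ} (hz : z ∈ seg) : z.re ^ 2 + z.im ^ 2 = 1 := by
  have : normSq (z : ℂ) = 1 := by rw [normSq_eq_norm_sq, hz.1, one_pow]
  simpa [normSq_apply, sq] using this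

lemma eq_of_mem_seg_of_im_eq {z w : ℍ} (hz : z ∈ seg) (hw : w ∈ seg) (h : z.im = w.im) :
    z = w := by
  have hz' := re_sq_add_im_sq_of_mem_seg hz
  have hw' := re_sq_add_im_sq_of_mem_seg hw
  have hre : z.re = w.re := (sq_eq_sq₀ hz.2.1 hw.2.1).mp (by rw [h] at hz'; linarith)
  exact UpperHalfPlane.ext (Complex.ext hre h)

lemma smul_eq_self_of_mem_seg {g : SL(2, ℤ)} {z : ℍ} (hz : z ∈ seg) (hgz : g • z ∈ seg) :
    g • z = z :=
  eq_of_mem_seg_of_im_eq hgz hz (im_smul_eq_im_of_mem_fd (seg_subset_fd hz) (seg_subset_fd hgz))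

lemma rho_eq_vadd : rho = (1 : ℝ) +ᵥ ρ := by
  apply UpperHalfPlane.ext
  simp [rho, ρ, Complex.ext_iff]
  norm_num

lemma eq_I_or_rho_of_smul_eq_self {g : SL(2, ℤ)} {z : ℍ} (hz : z ∈ seg)
    (hg : (QuotientGroup.mk g : PSL(2, ℤ)) ≠ 1) (hfix : g • z = z) : z = I ∨ z = rho := by
  by_contra! h
  have hρ : z ≠ ρ := by
    rintro rfl
    have : (0 : ℝ) ≤ ρ.re := hz.2.1
    norm_num [ρ] at this
  rcases stabilizer_of_ne (seg_subset_fd hz) hfix h.1 hρ (rho_eq_vadd ▸ h.2) with rfl | rfl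
  · exact hg (QuotientGroup.mk_one _)
  · exact hg (by rw [ProjectiveSpecialLinearGroup.mk_neg, QuotientGroup.mk_one])

lemma mk_mem_zpowers_S_of_smul_I {g : SL(2, ℤ)} (h : g • I = I) :
    (QuotientGroup.mk g : PSL(2, ℤ)) ∈ Subgroup.zpowers (QuotientGroup.mk S : PSL(2, ℤ)) := by
  obtain rfl | rfl | rfl | rfl : g = 1 ∨ g = -1 ∨ g = S ∨ g = -S := by
    simpa using stabilizer_I.mp h
  all_goals simp only [ProjectiveSpecialLinearGroup.mk_neg, QuotientGroup.mk_one, Subgroup.one_mem,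
    Subgroup.mem_zpowers]

lemma mk_mem_zpowers_U_of_smul_rho {g : SL(2, ℤ)} (h : g • rho = rho) :
    (QuotientGroup.mk g : PSL(2, ℤ)) ∈
      Subgroup.zpowers (QuotientGroup.mk matU : PSL(2, ℤ)) := by
  obtain ⟨k, hk, rfl⟩ : ∃ k : SL(2, ℤ), k • ρ = ρ ∧ g = T * k * T⁻¹ := by
    refine ⟨T⁻¹ * g * T, ?_, by group⟩
    rw [rho_eq_vadd, ← modular_T_smul] at h
    rw [mul_smul, mul_smul, h, inv_smul_smul]
  have hST : T * (S * T) * T⁻¹ = matU⁻¹ := by decide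
  have hTS : T * (T⁻¹ * S) * T⁻¹ = -matU := by decide
  obtain rfl | rfl | rfl | rfl | rfl | rfl :
      k = 1 ∨ k = -1 ∨ k = S * T ∨ k = -(S * T) ∨ k = T⁻¹ * S ∨ k = -(T⁻¹ * S) := by
    simpa using stabilizer_ρ.mp hk
  all_goals simp only [mul_neg, neg_mul, mul_one, mul_inv_cancel, hST, hTS,
    ProjectiveSpecialLinearGroup.mk_neg, QuotientGroup.mk_one, QuotientGroup.mk_inv,
    Subgroup.one_mem, Subgroup.inv_mem_iff, Subgroup.mem_zpowers]

/-- if `g ∈ PSL₂(ℤ)` is nontrivial and `g·r` meets `r` (where `r` is the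
geodesic segment joining `i` and `e^{πi/3}`), then `g·r ∩ r ⊆ {i, e^{πi/3}}`; moreover any
`g` fixing `i` lies in `⟨S⟩` and any `g` fixing `e^{πi/3}` lies in `⟨U⟩` (in `PSL₂(ℤ)`). -/
theorem stmt12 (g : SL(2, ℤ)) :
    (((QuotientGroup.mk g : PSL(2, ℤ)) ≠ 1) → ((g • ·) '' seg ∩ seg).Nonempty →
      (g • ·) '' seg ∩ seg ⊆ {UpperHalfPlane.I, rho}) ∧
    (g • UpperHalfPlane.I = UpperHalfPlane.I →
      (QuotientGroup.mk g : PSL(2, ℤ)) ∈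
        Subgroup.zpowers (QuotientGroup.mk matS : PSL(2, ℤ))) ∧
    (g • rho = rho →
      (QuotientGroup.mk g : PSL(2, ℤ)) ∈
        Subgroup.zpowers (QuotientGroup.mk matU : PSL(2, ℤ))) := by
  refine ⟨?_, mk_mem_zpowers_S_of_smul_I, mk_mem_zpowers_U_of_smul_rho⟩
  rintro hg - _ ⟨⟨z, hz, rfl⟩, hgz⟩
  have hfix : g • z = z := smul_eq_self_of_mem_seg hz hgz
  show g • z ∈ _
  rw [hfix]
  exact eq_I_or_rho_of_smul_eq_self hz hg hfix
end
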